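/- In the full observation model, fix i ∈ {1,…,n} and fix arbitrarily the control strategies g^{-i} of all control stations except station i. Then restricting attention at station i to control laws of the form U^i_t = g^i_t(X^i_t, Z_{1:t}, U_{1:t-1}) is without loss of optimality: for every strategy g^i of the general form U^i_t = g^i_t(Z_{1:t}, X^i_{1:t}, U_{1:t-1}) there exists a strategy ĝ^i whose laws depend only on (X^i_t, Z_{1:t}, U_{1:t-1}) with J(ĝ^i, g^{-i}) ≤ J(g^i, g^{-i}). -/

import Mathlib

open scoped Classical

namespace ControlSharing

variable {n T : ℕ}
variable {Z : Type} [Fintype Z] [Nonempty Z]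
variable {X : Fin n → Type} [∀ i, Fintype (X i)] [∀ i, Nonempty (X i)]
variable {U : Fin n → Type} [∀ i, Fintype (U i)] [∀ i, Nonempty (U i)]
variable {W0 : Type} [Fintype W0] [Nonempty W0]
variable {W : Fin n → Type} [∀ i, Fintype (W i)] [∀ i, Nonempty (W i)]

/-- A probability weight function on a finite type. -/
def IsLaw {α : Type} [Fintype α] (P : α → ℝ) : Prop :=
  (∀ a, 0 ≤ P a) ∧ ∑ a, P a = 1

/-- Sample space of primitive random variables: the initial shared state `Z₁`, the initial
local states `X₁ⁱ`, the shared-dynamics noises `W⁰_t` and the local noises `Wⁱ_t`. -/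
abbrev Omega (T : ℕ) (Z : Type) (X : Fin n → Type) (W0 : Type) (W : Fin n → Type) : Type :=
  Z × (∀ i, X i) × (Fin T → W0) × (∀ i, Fin T → W i)

/-- The probability weight of a sample point: `Z₁ ~ P_Z`; conditionally on `Z₁` the initial
local states are independent, `X₁ⁱ ~ P_{Xⁱ|Z}(·|Z₁)`; all noises are independent with laws
`P_{W⁰}`, `P_{Wⁱ}`, independent of the initial states. -/
noncomputable def weight (PZ : Z → ℝ) (PX : ∀ i, Z → X i → ℝ) (PW0 : W0 → ℝ)
    (PW : ∀ i, W i → ℝ) (ω : Omega T Z X W0 W) : ℝ :=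
  PZ ω.1 * (∏ i, PX i ω.1 (ω.2.1 i)) * (∏ t, PW0 (ω.2.2.1 t)) *
    (∏ i, ∏ t, PW i (ω.2.2.2 i t))

/-- A general control strategy: station `i` chooses `Uⁱ_t = gⁱ_t(Z_{1:t}, Xⁱ_{1:t}, U_{1:t-1})`. -/
def Strategy (Z : Type) (X U : Fin n → Type) : Type :=
  ∀ (i : Fin n) (t : ℕ), (Fin (t + 1) → Z) → (Fin (t + 1) → X i) →
    (Fin t → ∀ j, U j) → U i

variable (f0 : ℕ → Z → (∀ j, U j) → W0 → Z)
variable (f : ∀ i, ℕ → Z → X i → (∀ j, U j) → W i → X i)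

/-- The closed-loop trajectory: histories `(Z_{1:t+1}, X_{1:t+1}, U_{1:t+1})` generated by the
dynamics `Z_{t+1} = f⁰_t(Z_t, U_t, W⁰_t)`, `Xⁱ_{t+1} = fⁱ_t(Z_t, Xⁱ_t, U_t, Wⁱ_t)` and the
strategy `g`. -/
noncomputable def traj (g : Strategy Z X U) (ω : Omega T Z X W0 W) :
    (t : ℕ) → (Fin (t + 1) → Z) × (∀ i, Fin (t + 1) → X i) × (Fin (t + 1) → ∀ j, U j)
  | 0 =>
    let zh : Fin 1 → Z := fun _ => ω.1
    let xh : ∀ i, Fin 1 → X i := fun i _ => ω.2.1 i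
    ⟨zh, xh, fun _ j => g j 0 zh (xh j) (fun s => s.elim0)⟩
  | t + 1 =>
    let prev := traj g ω t
    let ucur := prev.2.2 (Fin.last t)
    let znew := f0 t (prev.1 (Fin.last t)) ucur
      (if h : t < T then ω.2.2.1 ⟨t, h⟩ else Classical.arbitrary W0)
    let xnew : ∀ i, X i := fun i =>
      f i t (prev.1 (Fin.last t)) (prev.2.1 i (Fin.last t)) ucur
        (if h : t < T then ω.2.2.2 i ⟨t, h⟩ else Classical.arbitrary (W i))
    let zh : Fin (t + 2) → Z := Fin.snoc prev.1 znew
    let xh : ∀ i, Fin (t + 2) → X i := fun i => Fin.snoc (prev.2.1 i) (xnew i)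
    ⟨zh, xh, Fin.snoc prev.2.2 (fun j => g j (t + 1) zh (xh j) prev.2.2)⟩

/-- The shared state process `Z_t`. -/
noncomputable def Zp (g : Strategy Z X U) (t : ℕ) (ω : Omega T Z X W0 W) : Z :=
  (traj f0 f g ω t).1 (Fin.last t)

/-- The local state process `Xⁱ_t`. -/
noncomputable def Xp (g : Strategy Z X U) (i : Fin n) (t : ℕ) (ω : Omega T Z X W0 W) : X i :=
  (traj f0 f g ω t).2.1 i (Fin.last t)

/-- The action process `Uⁱ_t`. -/
noncomputable def Up (g : Strategy Z X U) (i : Fin n) (t : ℕ) (ω : Omega T Z X W0 W) : U i :=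
  (traj f0 f g ω t).2.2 (Fin.last t) i

/-- Probability of an event under a weight function. -/
noncomputable def Pr {Ω : Type} [Fintype Ω] (μ : Ω → ℝ) (A : Ω → Prop) : ℝ :=
  ∑ ω : Ω, if A ω then μ ω else 0

/-- Conditional probability `P(A | B)`. -/
noncomputable def CondPr {Ω : Type} [Fintype Ω] (μ : Ω → ℝ) (A B : Ω → Prop) : ℝ :=
  Pr μ (fun ω => A ω ∧ B ω) / Pr μ B

/-- Conditional expectation `E[h | B]`. -/
noncomputable def CondExp {Ω : Type} [Fintype Ω] (μ : Ω → ℝ) (h : Ω → ℝ) (B : Ω → Prop) : ℝ :=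
  (∑ ω : Ω, if B ω then μ ω * h ω else 0) / Pr μ B

/-- The expected total cost `J(g) = E[∑_{t=1}^T c_t(Z_t, X_t, U_t)]`. -/
noncomputable def J (c : ℕ → Z → (∀ i, X i) → (∀ i, U i) → ℝ)
    (μ : Omega T Z X W0 W → ℝ) (g : Strategy Z X U) : ℝ :=
  ∑ ω : Omega T Z X W0 W, μ ω *
    ∑ t ∈ Finset.range T,
      c t (Zp f0 f g t ω) (fun i => Xp f0 f g i t ω) (fun i => Up f0 f g i t ω)

/-!
Backward induction on the time `τ` from which station `i` is memoryless; its laws after the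
horizon `T` do not enter the cost and can be made memoryless for free.

Suppose station `i` is memoryless after `τ`. Group the sample points into cells by the history
`k = (Z_{1:τ}, Xⁱ_{1:τ}, U_{1:τ-1})` and let `cellCost k a` be the unnormalized expected cost when
station `i` plays `a` at time `τ` on that cell; `J` is the sum over cells of `cellCost k (gⁱ_τ k)`.
Given the shared-state and action histories, station `i`'s initial state and its noises before `τ`
are independent of all other primitive variables and act on the future only through `Xⁱ_τ`.
Exchanging them between a sample point and an independent copy (`swapPast`) preserves the weight,
which gives, for two cells `k, k'` with the same reduced history `(Z_{1:τ}, U_{1:τ-1}, Xⁱ_τ)`,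
  `M k' * (cellCost k a - cellCost k a') = M k * (cellCost k' a - cellCost k' a')`,
where `M k = localMass k ≥ 0` is the weight of the values of station `i`'s primitive variables
compatible with `k`, and a cell with `M k = 0` carries no weight. So an action minimising `cellCost` on one cell of
positive mass minimises it on every cell with the same reduced history: choosing it defines a
memoryless law at time `τ` that does not increase `J`.
-/

set_option linter.unusedSectionVars false

/-- The value past `m` is junk; for the noise it is the value `traj` uses after the horizon. -/
noncomputable def toSeq {α : Type} [Nonempty α] {m : ℕ} (v : Fin m → α) (t : ℕ) : α :=
  if h : t < m then v ⟨t, h⟩ else Classical.arbitrary α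

lemma toSeq_of_lt {α : Type} [Nonempty α] {m : ℕ} (v : Fin m → α) {t : ℕ} (h : t < m) :
    toSeq v t = v ⟨t, h⟩ :=
  dif_pos h

@[simp]
lemma toSeq_val {α : Type} [Nonempty α] {m : ℕ} (v : Fin m → α) (p : Fin m) : toSeq v p = v p :=
  toSeq_of_lt v p.isLt

section Trajectory

variable (g : Strategy Z X U)

noncomputable def zHist (t : ℕ) (ω : Omega T Z X W0 W) : Fin (t + 1) → Z :=
  fun s => Zp f0 f g s ω

noncomputable def xHist (j : Fin n) (t : ℕ) (ω : Omega T Z X W0 W) : Fin (t + 1) → X j :=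
  fun s => Xp f0 f g j s ω

noncomputable def uHist (t : ℕ) (ω : Omega T Z X W0 W) : Fin t → ∀ j, U j :=
  fun s j => Up f0 f g j s ω

lemma traj_eq (ω : Omega T Z X W0 W) (t : ℕ) :
    traj f0 f g ω t =
      (zHist f0 f g t ω, fun j => xHist f0 f g j t ω, uHist f0 f g (t + 1) ω) := by
  induction t with
  | zero =>
    refine Prod.ext (funext fun s => ?_) (Prod.ext (funext fun j => funext fun s => ?_)
      (funext fun s => ?_)) <;> rw [Fin.fin_one_eq_zero s] <;> rfl
  | succ t ih =>
    refine Prod.ext (funext fun s => ?_) (Prod.ext (funext fun j => funext fun s => ?_)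
      (funext fun s => ?_)) <;> refine Fin.lastCases ?_ (fun q => ?_) s
    all_goals first
      | rfl
      | simp only [traj, Fin.snoc_castSucc]; rw [ih]; rfl

lemma Zp_succ (t : ℕ) (ω : Omega T Z X W0 W) :
    Zp f0 f g (t + 1) ω =
      f0 t (Zp f0 f g t ω) (fun j => Up f0 f g j t ω) (toSeq ω.2.2.1 t) := by
  simp [Zp, Up, traj, toSeq]

lemma Xp_succ (j : Fin n) (t : ℕ) (ω : Omega T Z X W0 W) :
    Xp f0 f g j (t + 1) ω =
      f j t (Zp f0 f g t ω) (Xp f0 f g j t ω) (fun j => Up f0 f g j t ω)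
        (toSeq (ω.2.2.2 j) t) := by
  simp [Xp, Zp, Up, traj, toSeq]

lemma Up_eq (j : Fin n) (t : ℕ) (ω : Omega T Z X W0 W) :
    Up f0 f g j t ω = g j t (zHist f0 f g t ω) (xHist f0 f g j t ω) (uHist f0 f g t ω) := by
  cases t with
  | zero =>
    show g j 0 _ _ _ = _
    congr 1 <;> funext s
    · rw [Fin.fin_one_eq_zero s]; rfl
    · rw [Fin.fin_one_eq_zero s]; rfl
    · exact s.elim0
  | succ t =>
    have h : Up f0 f g j (t + 1) ω = g j (t + 1) (traj f0 f g ω (t + 1)).1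
        ((traj f0 f g ω (t + 1)).2.1 j) (traj f0 f g ω t).2.2 := by
      simp [Up, traj]
    rw [h, traj_eq, traj_eq]

lemma zHist_succ (t : ℕ) (ω : Omega T Z X W0 W) :
    zHist f0 f g (t + 1) ω = Fin.snoc (zHist f0 f g t ω) (Zp f0 f g (t + 1) ω) := by
  funext s
  refine Fin.lastCases ?_ (fun q => ?_) s <;>
    simp only [Fin.snoc_last, Fin.snoc_castSucc] <;> rfl

lemma xHist_succ (j : Fin n) (t : ℕ) (ω : Omega T Z X W0 W) :
    xHist f0 f g j (t + 1) ω = Fin.snoc (xHist f0 f g j t ω) (Xp f0 f g j (t + 1) ω) := by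
  funext s
  refine Fin.lastCases ?_ (fun q => ?_) s <;>
    simp only [Fin.snoc_last, Fin.snoc_castSucc] <;> rfl

lemma uHist_succ (t : ℕ) (ω : Omega T Z X W0 W) :
    uHist f0 f g (t + 1) ω = Fin.snoc (uHist f0 f g t ω) (fun j => Up f0 f g j t ω) := by
  funext s
  refine Fin.lastCases ?_ (fun q => ?_) s <;>
    simp only [Fin.snoc_last, Fin.snoc_castSucc] <;> rfl

end Trajectory

def MemorylessAt (g : Strategy Z X U) (i : Fin n) (t : ℕ) : Prop :=
  ∀ (zh : Fin (t + 1) → Z) (xh xh' : Fin (t + 1) → X i) (uh : Fin t → ∀ j, U j),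
    xh (Fin.last t) = xh' (Fin.last t) → g i t zh xh uh = g i t zh xh' uh

lemma Up_congr_of_memorylessAt {g : Strategy Z X U} {i : Fin n} {t : ℕ}
    {ω ω' : Omega T Z X W0 W} (hg : MemorylessAt g i t)
    (hz : zHist f0 f g t ω = zHist f0 f g t ω') (hx : Xp f0 f g i t ω = Xp f0 f g i t ω')
    (hu : uHist f0 f g t ω = uHist f0 f g t ω') :
    Up f0 f g i t ω = Up f0 f g i t ω' := by
  rw [Up_eq, Up_eq, hz, hu]
  exact hg _ _ _ _ hx

lemma hist_eq_of_laws_agree {E E' : Strategy Z X U} {ω : Omega T Z X W0 W} {t : ℕ}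
    (h : ∀ j, ∀ s < t,
      E j s (zHist f0 f E s ω) (xHist f0 f E j s ω) (uHist f0 f E s ω) =
        E' j s (zHist f0 f E s ω) (xHist f0 f E j s ω) (uHist f0 f E s ω)) :
    zHist f0 f E t ω = zHist f0 f E' t ω ∧ (∀ j, xHist f0 f E j t ω = xHist f0 f E' j t ω) ∧
      uHist f0 f E t ω = uHist f0 f E' t ω := by
  induction t with
  | zero =>
    refine ⟨funext fun s => ?_, fun j => funext fun s => ?_, funext fun s => s.elim0⟩ <;>
      rw [Fin.fin_one_eq_zero s] <;> rfl
  | succ t ih =>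
    obtain ⟨hz, hx, hu⟩ := ih fun j s hs => h j s (by omega)
    have hZ : Zp f0 f E t ω = Zp f0 f E' t ω := congrFun hz (Fin.last t)
    have hU : (fun j => Up f0 f E j t ω) = fun j => Up f0 f E' j t ω := by
      funext j
      rw [Up_eq, Up_eq, h j t t.lt_succ_self, hz, hx, hu]
    refine ⟨?_, fun j => ?_, ?_⟩
    · rw [zHist_succ, zHist_succ, Zp_succ, Zp_succ, hz, hZ, hU]
    · have hX : Xp f0 f E j t ω = Xp f0 f E' j t ω := congrFun (hx j) (Fin.last t)
      rw [xHist_succ, xHist_succ, Xp_succ, Xp_succ, hx, hZ, hX, hU]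
    · rw [uHist_succ, uHist_succ, hu, hU]

lemma hist_eq_of_eqOn {E E' : Strategy Z X U} {t : ℕ} (h : ∀ j, ∀ s < t, E j s = E' j s)
    (ω : Omega T Z X W0 W) :
    zHist f0 f E t ω = zHist f0 f E' t ω ∧ (∀ j, xHist f0 f E j t ω = xHist f0 f E' j t ω) ∧
      uHist f0 f E t ω = uHist f0 f E' t ω :=
  hist_eq_of_laws_agree f0 f fun j s hs => by rw [h j s hs]

lemma hist_eq_of_memorylessFrom {g : Strategy Z X U} {i : Fin n} {τ : ℕ}
    {ω ω' : Omega T Z X W0 W} (hg : ∀ s, τ ≤ s → MemorylessAt g i s)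
    (hw0 : ω.2.2.1 = ω'.2.2.1) (hw : ∀ j, j ≠ i → ω.2.2.2 j = ω'.2.2.2 j)
    (hwi : ∀ s, τ ≤ s → toSeq (ω.2.2.2 i) s = toSeq (ω'.2.2.2 i) s)
    (hz : zHist f0 f g τ ω = zHist f0 f g τ ω') (hu : uHist f0 f g τ ω = uHist f0 f g τ ω')
    (hx : ∀ j, j ≠ i → xHist f0 f g j τ ω = xHist f0 f g j τ ω')
    (hxi : Xp f0 f g i τ ω = Xp f0 f g i τ ω') {t : ℕ} (ht : τ ≤ t) :
    zHist f0 f g t ω = zHist f0 f g t ω' ∧ uHist f0 f g t ω = uHist f0 f g t ω' ∧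
      (∀ j, j ≠ i → xHist f0 f g j t ω = xHist f0 f g j t ω') ∧
      Xp f0 f g i t ω = Xp f0 f g i t ω' := by
  induction t, ht using Nat.le_induction with
  | base => exact ⟨hz, hu, hx, hxi⟩
  | succ t ht ih =>
    obtain ⟨hz, hu, hx, hxi⟩ := ih
    have hZ : Zp f0 f g t ω = Zp f0 f g t ω' := congrFun hz (Fin.last t)
    have hU : (fun j => Up f0 f g j t ω) = fun j => Up f0 f g j t ω' := by
      funext j
      by_cases hj : j = i
      · subst hj
        exact Up_congr_of_memorylessAt f0 f (hg t ht) hz hxi hu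
      · rw [Up_eq, Up_eq, hz, hx j hj, hu]
    refine ⟨?_, ?_, fun j hj => ?_, ?_⟩
    · rw [zHist_succ, zHist_succ, Zp_succ, Zp_succ, hz, hZ, hU, hw0]
    · rw [uHist_succ, uHist_succ, hu, hU]
    · have hX : Xp f0 f g j t ω = Xp f0 f g j t ω' := congrFun (hx j hj) (Fin.last t)
      rw [xHist_succ, xHist_succ, Xp_succ, Xp_succ, hx j hj, hZ, hX, hU, hw j hj]
    · rw [Xp_succ, Xp_succ, hZ, hxi, hU, hwi t ht]

noncomputable def localRun (j : Fin n) (zs : ℕ → Z) (us : ℕ → ∀ j, U j) (x : X j)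
    (ws : ℕ → W j) : ℕ → X j
  | 0 => x
  | t + 1 => f j t (zs t) (localRun j zs us x ws t) (us t) (ws t)

lemma Xp_eq_localRun (g : Strategy Z X U) (j : Fin n) (ω : Omega T Z X W0 W) (t : ℕ) :
    Xp f0 f g j t ω = localRun f j (Zp f0 f g · ω) (fun s j => Up f0 f g j s ω) (ω.2.1 j)
      (toSeq (ω.2.2.2 j)) t := by
  induction t with
  | zero => rfl
  | succ t ih => rw [Xp_succ, ih]; rfl

lemma localRun_congr {j : Fin n} {zs zs' : ℕ → Z} {us us' : ℕ → ∀ j, U j} (x : X j)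
    {ws ws' : ℕ → W j} {t : ℕ} (h : ∀ s < t, zs s = zs' s ∧ us s = us' s ∧ ws s = ws' s) :
    localRun f j zs us x ws t = localRun f j zs' us' x ws' t := by
  induction t with
  | zero => rfl
  | succ t ih =>
    obtain ⟨hz, hu, hw⟩ := h t t.lt_succ_self
    rw [localRun, localRun, ih fun s hs => h s (by omega), hz, hu, hw]

lemma xHist_eq_of_hist_eq {g : Strategy Z X U} {j : Fin n} {τ : ℕ} {ω ω' : Omega T Z X W0 W}
    (hz : zHist f0 f g τ ω = zHist f0 f g τ ω') (hu : uHist f0 f g τ ω = uHist f0 f g τ ω')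
    (hx : ω.2.1 j = ω'.2.1 j) (hw : ω.2.2.2 j = ω'.2.2.2 j) :
    xHist f0 f g j τ ω = xHist f0 f g j τ ω' := by
  funext p
  simp only [xHist, Xp_eq_localRun, hx, hw]
  exact localRun_congr f _ fun s hs =>
    ⟨congrFun hz ⟨s, by omega⟩, funext fun j => congrFun (congrFun hu ⟨s, by omega⟩) j, rfl⟩

abbrev History (Z : Type) (X U : Fin n → Type) (i : Fin n) (τ : ℕ) : Type :=
  (Fin (τ + 1) → Z) × (Fin (τ + 1) → X i) × (Fin τ → ∀ j, U j)

noncomputable def history (g : Strategy Z X U) (i : Fin n) (τ : ℕ) (ω : Omega T Z X W0 W) :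
    History Z X U i τ :=
  (zHist f0 f g τ ω, xHist f0 f g i τ ω, uHist f0 f g τ ω)

def SharedConsistent {τ : ℕ} (zh : Fin (τ + 1) → Z) (uh : Fin τ → ∀ j, U j) (w0 : Fin T → W0) :
    Prop :=
  ∀ s : Fin τ, f0 s (zh s.castSucc) (uh s) (toSeq w0 s) = zh s.succ

def ActionsConsistent (g : Strategy Z X U) (j : Fin n) {τ : ℕ} (zh : Fin (τ + 1) → Z)
    (uh : Fin τ → ∀ j, U j) (x : X j) (w : Fin T → W j) : Prop :=
  ∀ s : Fin τ, g j s (fun p => toSeq zh p)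
    (fun p => localRun f j (toSeq zh) (toSeq uh) x (toSeq w) p) (fun p => toSeq uh p) = uh s j

def LocalConsistent {j : Fin n} {τ : ℕ} (zh : Fin (τ + 1) → Z) (xh : Fin (τ + 1) → X j)
    (uh : Fin τ → ∀ j, U j) (x : X j) (w : Fin T → W j) : Prop :=
  ∀ s : Fin (τ + 1), localRun f j (toSeq zh) (toSeq uh) x (toSeq w) s = xh s

lemma forall_fin_eq_iff_toSeq {α : Type} [Nonempty α] {m : ℕ} (P : ℕ → α) (v : Fin m → α) :
    (∀ p : Fin m, P p = v p) ↔ ∀ s < m, P s = toSeq v s :=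
  ⟨fun h s hs => by rw [toSeq_of_lt v hs]; exact h ⟨s, hs⟩,
    fun h p => by rw [h p p.isLt, toSeq_of_lt v p.isLt]⟩

lemma history_eq_iff_forall (g : Strategy Z X U) (i : Fin n) {τ : ℕ} (ω : Omega T Z X W0 W)
    (zh : Fin (τ + 1) → Z) (xh : Fin (τ + 1) → X i) (uh : Fin τ → ∀ j, U j) :
    history f0 f g i τ ω = (zh, xh, uh) ↔
      (∀ s ≤ τ, Zp f0 f g s ω = toSeq zh s) ∧ (∀ s ≤ τ, Xp f0 f g i s ω = toSeq xh s) ∧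
        (∀ s < τ, (fun j => Up f0 f g j s ω) = toSeq uh s) := by
  simp only [history, Prod.mk.injEq, funext_iff (f := zHist _ _ _ _ _),
    funext_iff (f := xHist _ _ _ _ _ _), funext_iff (f := uHist _ _ _ _ _), ← Nat.lt_succ_iff]
  exact and_congr (forall_fin_eq_iff_toSeq (Zp f0 f g · ω) zh)
    (and_congr (forall_fin_eq_iff_toSeq (Xp f0 f g i · ω) xh)
      (forall_fin_eq_iff_toSeq (fun s j => Up f0 f g j s ω) uh))

section Prefix

variable (g : Strategy Z X U) {ω : Omega T Z X W0 W} {τ : ℕ} {zh : Fin (τ + 1) → Z}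
  {uh : Fin τ → ∀ j, U j} {t : ℕ}

lemma Xp_eq_localRun_of_prefix (hz : ∀ s < t, Zp f0 f g s ω = toSeq zh s)
    (hu : ∀ s < t, (fun j => Up f0 f g j s ω) = toSeq uh s) (j : Fin n) :
    Xp f0 f g j t ω = localRun f j (toSeq zh) (toSeq uh) (ω.2.1 j) (toSeq (ω.2.2.2 j)) t := by
  rw [Xp_eq_localRun]
  exact localRun_congr f _ fun s hs => ⟨hz s hs, hu s hs, rfl⟩

lemma Up_eq_of_prefix (hz : ∀ s ≤ t, Zp f0 f g s ω = toSeq zh s)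
    (hu : ∀ s < t, (fun j => Up f0 f g j s ω) = toSeq uh s) (j : Fin n) :
    Up f0 f g j t ω = g j t (fun p => toSeq zh p)
      (fun p => localRun f j (toSeq zh) (toSeq uh) (ω.2.1 j) (toSeq (ω.2.2.2 j)) p)
      (fun p => toSeq uh p) := by
  rw [Up_eq]
  congr 1 <;> funext p
  · exact hz p (by omega)
  · exact Xp_eq_localRun_of_prefix f0 f g (fun s hs => hz s (by omega))
      (fun s hs => hu s (by omega)) j
  · exact hu p p.isLt

end Prefix

/-- The event `{history = (zh, xh, uh)}` factorizes into conditions on disjoint blocks of the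
primitive variables: `Z₁`, the shared noise, and the pairs `(X₁ʲ, Wʲ)` of each station. -/
lemma history_eq_iff (g : Strategy Z X U) (i : Fin n) {τ : ℕ} (ω : Omega T Z X W0 W)
    (zh : Fin (τ + 1) → Z) (xh : Fin (τ + 1) → X i) (uh : Fin τ → ∀ j, U j) :
    history f0 f g i τ ω = (zh, xh, uh) ↔
      ω.1 = zh 0 ∧ SharedConsistent f0 zh uh ω.2.2.1 ∧
        (∀ j, ActionsConsistent f g j zh uh (ω.2.1 j) (ω.2.2.2 j)) ∧
        LocalConsistent f zh xh uh (ω.2.1 i) (ω.2.2.2 i) := by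
  rw [history_eq_iff_forall]
  constructor
  · rintro ⟨hz, hx, hu⟩
    refine ⟨(hz 0 (Nat.zero_le _)).trans (toSeq_of_lt zh _), fun s => ?_, fun j s => ?_,
      fun s => ?_⟩
    · have h := hz (s + 1) s.isLt
      rw [Zp_succ, hz s (by omega), hu s s.isLt, toSeq_val, toSeq_of_lt zh, toSeq_of_lt zh] at h
      exact h
    · have h := congrFun (hu s s.isLt) j
      rw [Up_eq_of_prefix f0 f g (fun p hp => hz p (by omega)) (fun p hp => hu p (by omega))] at h
      simpa using h
    · have h := hx s (by omega)
      rw [Xp_eq_localRun_of_prefix f0 f g (fun p hp => hz p (by omega))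
        (fun p hp => hu p (by omega)), toSeq_val] at h
      exact h
  · rintro ⟨h1, h2, h3, h4⟩
    have hprefix : ∀ t ≤ τ, (∀ s ≤ t, Zp f0 f g s ω = toSeq zh s) ∧
        ∀ s < t, (fun j => Up f0 f g j s ω) = toSeq uh s := by
      intro t ht
      induction t with
      | zero =>
        refine ⟨fun s hs => ?_, fun s hs => absurd hs (Nat.not_lt_zero s)⟩
        obtain rfl : s = 0 := by omega
        exact h1.trans (toSeq_of_lt zh _).symm
      | succ t ih =>
        obtain ⟨hz, hu⟩ := ih (by omega)
        have hUt : (fun j => Up f0 f g j t ω) = toSeq uh t := by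
          funext j
          rw [Up_eq_of_prefix f0 f g hz hu, toSeq_of_lt uh (by omega : t < τ)]
          exact h3 j ⟨t, by omega⟩
        have hZt : Zp f0 f g (t + 1) ω = toSeq zh (t + 1) := by
          rw [Zp_succ, hz t le_rfl, hUt, toSeq_of_lt zh (by omega : t < τ + 1),
            toSeq_of_lt uh (by omega : t < τ), toSeq_of_lt zh (by omega : t + 1 < τ + 1)]
          exact h2 ⟨t, by omega⟩
        refine ⟨fun s hs => ?_, fun s hs => ?_⟩
        · rcases Nat.lt_or_eq_of_le hs with hs | rfl
          · exact hz s (by omega)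
          · exact hZt
        · rcases Nat.lt_or_eq_of_le (Nat.lt_succ_iff.mp hs) with hs | rfl
          · exact hu s hs
          · exact hUt
    obtain ⟨hz, hu⟩ := hprefix τ le_rfl
    refine ⟨hz, fun s hs => ?_, hu⟩
    rw [Xp_eq_localRun_of_prefix f0 f g (fun p hp => hz p (by omega))
      (fun p hp => hu p (by omega)), toSeq_of_lt xh (by omega)]
    exact h4 ⟨s, by omega⟩

section NoiseCongr

variable {τ : ℕ} {zh : Fin (τ + 1) → Z} {uh : Fin τ → ∀ j, U j} {j : Fin n} {x : X j}
  {w w' : Fin T → W j}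

lemma actionsConsistent_congr_noise (g : Strategy Z X U)
    (hw : ∀ s < τ, toSeq w s = toSeq w' s) :
    ActionsConsistent f g j zh uh x w ↔ ActionsConsistent f g j zh uh x w' := by
  refine forall_congr' fun s => ?_
  have e : (fun p : Fin (s + 1) => localRun f j (toSeq zh) (toSeq uh) x (toSeq w) p) =
      fun p : Fin (s + 1) => localRun f j (toSeq zh) (toSeq uh) x (toSeq w') p :=
    funext fun p => localRun_congr f x fun r hr => ⟨rfl, rfl, hw r (by omega)⟩
  rw [e]

lemma localConsistent_congr_noise (xh : Fin (τ + 1) → X j)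
    (hw : ∀ s < τ, toSeq w s = toSeq w' s) :
    LocalConsistent f zh xh uh x w ↔ LocalConsistent f zh xh uh x w' := by
  refine forall_congr' fun s => ?_
  rw [localRun_congr f x fun r hr => ⟨rfl, rfl, hw r (by omega)⟩]

end NoiseCongr

def StationConsistent (g : Strategy Z X U) {i : Fin n} {τ : ℕ} (k : History Z X U i τ)
    (y : X i × (Fin T → W i)) : Prop :=
  LocalConsistent f k.1 k.2.1 k.2.2 y.1 y.2 ∧ ActionsConsistent f g i k.1 k.2.2 y.1 y.2

def splice {α : Type} (τ : ℕ) (w w' : Fin T → α) : Fin T → α :=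
  fun t => if (t : ℕ) < τ then w t else w' t

lemma splice_splice {α : Type} (τ : ℕ) (w w' : Fin T → α) :
    splice τ (splice τ w w') (splice τ w' w) = w := by
  funext t
  by_cases ht : (t : ℕ) < τ <;> simp [splice, ht]

lemma toSeq_splice_of_lt {α : Type} [Nonempty α] {τ : ℕ} (w w' : Fin T → α) {s : ℕ}
    (hs : s < τ) : toSeq (splice τ w w') s = toSeq w s := by
  unfold toSeq splice
  split_ifs <;> rfl

lemma toSeq_splice_of_le {α : Type} [Nonempty α] {τ : ℕ} (w w' : Fin T → α) {s : ℕ}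
    (hs : τ ≤ s) : toSeq (splice τ w w') s = toSeq w' s := by
  unfold toSeq splice
  split_ifs with h h' <;> first | rfl | exact absurd h' (by simp; omega)

/-- Exchanges station `i`'s initial local state and its noises before `τ` between the sample
point `p.2` and the copy `p.1` of station `i`'s primitive variables. -/
def swapPast (i : Fin n) (τ : ℕ) (p : (X i × (Fin T → W i)) × Omega T Z X W0 W) :
    (X i × (Fin T → W i)) × Omega T Z X W0 W :=
  ((p.2.2.1 i, splice τ (p.2.2.2.2 i) p.1.2),
    (p.2.1, Function.update p.2.2.1 i p.1.1, p.2.2.2.1,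
      Function.update p.2.2.2.2 i (splice τ p.1.2 (p.2.2.2.2 i))))

lemma swapPast_involutive (i : Fin n) (τ : ℕ) :
    Function.Involutive (swapPast (T := T) (Z := Z) (W0 := W0) (X := X) (W := W) i τ) := by
  intro p
  simp [swapPast, splice_splice]

lemma swapPast_mem_cell {g : Strategy Z X U} {i : Fin n} {τ : ℕ} {zh : Fin (τ + 1) → Z}
    {xh xh' : Fin (τ + 1) → X i} {uh : Fin τ → ∀ j, U j}
    {p : (X i × (Fin T → W i)) × Omega T Z X W0 W}
    (hp : history f0 f g i τ p.2 = (zh, xh, uh)) (hy : StationConsistent f g (zh, xh', uh) p.1) :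
    history f0 f g i τ (swapPast i τ p).2 = (zh, xh', uh) ∧
      StationConsistent f g (zh, xh, uh) (swapPast i τ p).1 := by
  rw [history_eq_iff] at hp ⊢
  obtain ⟨h1, h2, h3, h4⟩ := hp
  obtain ⟨hyl, hya⟩ := hy
  have hb : ∀ s < τ, toSeq (splice τ p.1.2 (p.2.2.2.2 i)) s = toSeq p.1.2 s :=
    fun s hs => toSeq_splice_of_lt _ _ hs
  have hb' : ∀ s < τ, toSeq (splice τ (p.2.2.2.2 i) p.1.2) s = toSeq (p.2.2.2.2 i) s :=
    fun s hs => toSeq_splice_of_lt _ _ hs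
  refine ⟨⟨h1, h2, fun j => ?_, ?_⟩, (localConsistent_congr_noise f _ hb').mpr h4,
    (actionsConsistent_congr_noise f g hb').mpr (h3 i)⟩
  · by_cases hj : j = i
    · subst hj
      simp only [swapPast, Function.update_self]
      exact (actionsConsistent_congr_noise f g hb).mpr hya
    · simp only [swapPast, Function.update_of_ne hj]
      exact h3 j
  · simp only [swapPast, Function.update_self]
    exact (localConsistent_congr_noise f _ hb).mpr hyl

section Weights

variable (PZ : Z → ℝ) (PX : ∀ i, Z → X i → ℝ) (PW0 : W0 → ℝ) (PW : ∀ i, W i → ℝ)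

noncomputable def localWeight (i : Fin n) (z : Z) (y : X i × (Fin T → W i)) : ℝ :=
  PX i z y.1 * ∏ t, PW i (y.2 t)

noncomputable def restWeight (i : Fin n) (ω : Omega T Z X W0 W) : ℝ :=
  PZ ω.1 * (∏ j ∈ Finset.univ.erase i, PX j ω.1 (ω.2.1 j)) * (∏ t, PW0 (ω.2.2.1 t)) *
    ∏ j ∈ Finset.univ.erase i, ∏ t, PW j (ω.2.2.2 j t)

lemma weight_eq_localWeight_mul (i : Fin n) (ω : Omega T Z X W0 W) :
    weight PZ PX PW0 PW ω =
      localWeight PX PW i ω.1 (ω.2.1 i, ω.2.2.2 i) * restWeight PZ PX PW0 PW i ω := by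
  rw [weight, localWeight, restWeight, ← Finset.mul_prod_erase _ _ (Finset.mem_univ i),
    ← Finset.mul_prod_erase _ (fun j => ∏ t, PW j (ω.2.2.2 j t)) (Finset.mem_univ i)]
  ring

lemma localWeight_nonneg (hPX : ∀ i z x, 0 ≤ PX i z x) (hPW : ∀ i w, 0 ≤ PW i w) (i : Fin n)
    (z : Z) (y : X i × (Fin T → W i)) : 0 ≤ localWeight PX PW i z y :=
  mul_nonneg (hPX _ _ _) (Finset.prod_nonneg fun _ _ => hPW _ _)

lemma restWeight_swapPast (i : Fin n) (τ : ℕ) (p : (X i × (Fin T → W i)) × Omega T Z X W0 W) :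
    restWeight PZ PX PW0 PW i (swapPast i τ p).2 = restWeight PZ PX PW0 PW i p.2 := by
  have hX : ∀ j ∈ Finset.univ.erase i,
      PX j p.2.1 (Function.update p.2.2.1 i p.1.1 j) = PX j p.2.1 (p.2.2.1 j) :=
    fun j hj => by rw [Function.update_of_ne (Finset.ne_of_mem_erase hj)]
  have hW : ∀ j ∈ Finset.univ.erase i,
      ∏ t, PW j (Function.update p.2.2.2.2 i (splice τ p.1.2 (p.2.2.2.2 i)) j t) =
        ∏ t, PW j (p.2.2.2.2 j t) :=
    fun j hj => by rw [Function.update_of_ne (Finset.ne_of_mem_erase hj)]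
  simp only [restWeight, swapPast]
  rw [Finset.prod_congr rfl hX, Finset.prod_congr rfl hW]

lemma localWeight_mul_weight_swapPast (i : Fin n) (τ : ℕ)
    (p : (X i × (Fin T → W i)) × Omega T Z X W0 W) :
    localWeight PX PW i p.2.1 (swapPast i τ p).1 * weight PZ PX PW0 PW (swapPast i τ p).2 =
      localWeight PX PW i p.2.1 p.1 * weight PZ PX PW0 PW p.2 := by
  rw [weight_eq_localWeight_mul PZ PX PW0 PW i, weight_eq_localWeight_mul PZ PX PW0 PW i,
    restWeight_swapPast]
  have hW : (∏ t, PW i (splice τ (p.2.2.2.2 i) p.1.2 t)) *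
      ∏ t, PW i (splice τ p.1.2 (p.2.2.2.2 i) t) =
      (∏ t, PW i (p.1.2 t)) * ∏ t, PW i (p.2.2.2.2 i t) := by
    rw [← Finset.prod_mul_distrib, ← Finset.prod_mul_distrib]
    refine Finset.prod_congr rfl fun t _ => ?_
    by_cases ht : (t : ℕ) < τ <;> simp [splice, ht, mul_comm]
  simp only [localWeight, swapPast, Function.update_self]
  linear_combination (PX i p.2.1 (p.2.2.1 i) * PX i p.2.1 p.1.1 *
    restWeight PZ PX PW0 PW i p.2) * hW

end Weights

section Costs

variable (c : ℕ → Z → (∀ i, X i) → (∀ i, U i) → ℝ)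

noncomputable def stageCost (g : Strategy Z X U) (t : ℕ) (ω : Omega T Z X W0 W) : ℝ :=
  c t (Zp f0 f g t ω) (fun j => Xp f0 f g j t ω) (fun j => Up f0 f g j t ω)

noncomputable def totalCost (g : Strategy Z X U) (ω : Omega T Z X W0 W) : ℝ :=
  ∑ t ∈ Finset.range T, stageCost f0 f c g t ω

lemma J_eq_sum_totalCost (μ : Omega T Z X W0 W → ℝ) (g : Strategy Z X U) :
    J f0 f c μ g = ∑ ω, μ ω * totalCost f0 f c g ω :=
  rfl

lemma stageCost_congr {E E' : Strategy Z X U} {t : ℕ} {ω ω' : Omega T Z X W0 W}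
    (hz : Zp f0 f E t ω = Zp f0 f E' t ω') (hx : ∀ j, Xp f0 f E j t ω = Xp f0 f E' j t ω')
    (hu : ∀ j, Up f0 f E j t ω = Up f0 f E' j t ω') :
    stageCost f0 f c E t ω = stageCost f0 f c E' t ω' := by
  simp only [stageCost, hz, hx, hu]

lemma stageCost_congr_of_hist {E E' : Strategy Z X U} {t : ℕ} {ω : Omega T Z X W0 W}
    (h : zHist f0 f E (t + 1) ω = zHist f0 f E' (t + 1) ω ∧
      (∀ j, xHist f0 f E j (t + 1) ω = xHist f0 f E' j (t + 1) ω) ∧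
      uHist f0 f E (t + 1) ω = uHist f0 f E' (t + 1) ω) :
    stageCost f0 f c E t ω = stageCost f0 f c E' t ω :=
  stageCost_congr f0 f c (congrFun h.1 ⟨t, by omega⟩)
    (fun j => congrFun (h.2.1 j) ⟨t, by omega⟩)
    (fun j => congrFun (congrFun h.2.2 ⟨t, by omega⟩) j)

lemma stageCost_congr_of_eqOn {E E' : Strategy Z X U} {t : ℕ} (h : ∀ j, ∀ s ≤ t, E j s = E' j s)
    (ω : Omega T Z X W0 W) : stageCost f0 f c E t ω = stageCost f0 f c E' t ω :=
  stageCost_congr_of_hist f0 f c (hist_eq_of_eqOn f0 f (fun j s hs => h j s (by omega)) ω)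

lemma J_congr {E E' : Strategy Z X U} (h : ∀ j, ∀ s < T, E j s = E' j s)
    (μ : Omega T Z X W0 W → ℝ) : J f0 f c μ E = J f0 f c μ E' := by
  simp only [J_eq_sum_totalCost, totalCost]
  refine Finset.sum_congr rfl fun ω _ => congrArg _ (Finset.sum_congr rfl fun t ht => ?_)
  exact stageCost_congr_of_eqOn f0 f c
    (fun j s hs => h j s (lt_of_le_of_lt hs (Finset.mem_range.mp ht))) ω

lemma stageCost_eq_of_memorylessFrom {g : Strategy Z X U} {i : Fin n} {τ : ℕ}
    {ω ω' : Omega T Z X W0 W} (hg : ∀ s, τ ≤ s → MemorylessAt g i s)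
    (hw0 : ω.2.2.1 = ω'.2.2.1) (hw : ∀ j, j ≠ i → ω.2.2.2 j = ω'.2.2.2 j)
    (hwi : ∀ s, τ ≤ s → toSeq (ω.2.2.2 i) s = toSeq (ω'.2.2.2 i) s)
    (hz : zHist f0 f g τ ω = zHist f0 f g τ ω') (hu : uHist f0 f g τ ω = uHist f0 f g τ ω')
    (hx : ∀ j, j ≠ i → xHist f0 f g j τ ω = xHist f0 f g j τ ω')
    (hxi : Xp f0 f g i τ ω = Xp f0 f g i τ ω') {t : ℕ} (ht : τ ≤ t) :
    stageCost f0 f c g t ω = stageCost f0 f c g t ω' := by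
  obtain ⟨hzt, -, hxt, hxit⟩ := hist_eq_of_memorylessFrom f0 f hg hw0 hw hwi hz hu hx hxi ht
  obtain ⟨-, hut, -, -⟩ :=
    hist_eq_of_memorylessFrom f0 f hg hw0 hw hwi hz hu hx hxi (Nat.le_succ_of_le ht)
  refine stageCost_congr f0 f c (congrFun hzt (Fin.last t)) (fun j => ?_)
    (fun j => congrFun (congrFun hut (Fin.last t)) j)
  by_cases hj : j = i
  · subst hj
    exact hxit
  · exact congrFun (hxt j hj) (Fin.last t)

def replaceLaw (g : Strategy Z X U) (i : Fin n) (τ : ℕ)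
    (L : (Fin (τ + 1) → Z) → (Fin (τ + 1) → X i) → (Fin τ → ∀ j, U j) → U i) :
    Strategy Z X U :=
  Function.update g i (Function.update (g i) τ L)

section ReplaceLaw

variable (g : Strategy Z X U) (i : Fin n) (τ : ℕ)
  (L : (Fin (τ + 1) → Z) → (Fin (τ + 1) → X i) → (Fin τ → ∀ j, U j) → U i)

@[simp]
lemma replaceLaw_self : replaceLaw g i τ L i τ = L := by
  unfold replaceLaw
  erw [Function.update_self, Function.update_self]

lemma replaceLaw_of_ne {j : Fin n} {t : ℕ} (h : ¬(j = i ∧ t = τ)) :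
    replaceLaw g i τ L j t = g j t := by
  unfold replaceLaw
  by_cases hj : j = i
  · subst hj
    erw [Function.update_self, Function.update_of_ne fun ht => h ⟨rfl, ht⟩]
  · erw [Function.update_of_ne hj]

@[simp]
lemma replaceLaw_replaceLaw (L') :
    replaceLaw (replaceLaw g i τ L) i τ L' = replaceLaw g i τ L' := by
  unfold replaceLaw
  erw [Function.update_idem, Function.update_self, Function.update_idem]

end ReplaceLaw

lemma memorylessAt_replaceLaw_of_ne {g : Strategy Z X U} {i : Fin n} {τ s : ℕ} (L)
    (hg : MemorylessAt g i s) (hs : s ≠ τ) : MemorylessAt (replaceLaw g i τ L) i s := by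
  intro zh xh xh' uh h
  rw [replaceLaw_of_ne g i τ L fun h => hs h.2]
  exact hg zh xh xh' uh h

noncomputable def costWithAction (g : Strategy Z X U) (i : Fin n) (τ : ℕ) (a : U i)
    (ω : Omega T Z X W0 W) : ℝ :=
  totalCost f0 f c (replaceLaw g i τ fun _ _ _ => a) ω

noncomputable def cellCost (g : Strategy Z X U) (μ : Omega T Z X W0 W → ℝ) {i : Fin n} {τ : ℕ}
    (k : History Z X U i τ) (a : U i) : ℝ :=
  ∑ ω, if history f0 f g i τ ω = k then μ ω * costWithAction f0 f c g i τ a ω else 0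

lemma totalCost_eq_costWithAction (g : Strategy Z X U) (i : Fin n) (τ : ℕ)
    (ω : Omega T Z X W0 W) :
    totalCost f0 f c g ω = costWithAction f0 f c g i τ (Up f0 f g i τ ω) ω := by
  refine Finset.sum_congr rfl fun t _ =>
    stageCost_congr_of_hist f0 f c (hist_eq_of_laws_agree f0 f fun j s _ => ?_)
  by_cases h : j = i ∧ s = τ
  · obtain ⟨rfl, rfl⟩ := h
    rw [replaceLaw_self]
    exact (Up_eq f0 f g j s ω).symm
  · rw [replaceLaw_of_ne _ _ _ _ h]

lemma J_eq_sum_cellCost (μ : Omega T Z X W0 W → ℝ) (g : Strategy Z X U) (i : Fin n) (τ : ℕ) :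
    J f0 f c μ g = ∑ k : History Z X U i τ, cellCost f0 f c g μ k (g i τ k.1 k.2.1 k.2.2) := by
  rw [J_eq_sum_totalCost, ← Finset.sum_fiberwise Finset.univ (history f0 f g i τ)]
  refine Finset.sum_congr rfl fun k _ => ?_
  rw [cellCost, Finset.sum_filter]
  refine Finset.sum_congr rfl fun ω _ => ?_
  split_ifs with h
  · rw [totalCost_eq_costWithAction f0 f c g i τ, Up_eq, ← h]
    rfl
  · rfl

lemma history_replaceLaw (g : Strategy Z X U) (i : Fin n) (τ : ℕ) (L)
    (ω : Omega T Z X W0 W) : history f0 f (replaceLaw g i τ L) i τ ω = history f0 f g i τ ω := by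
  obtain ⟨hz, hx, hu⟩ :=
    hist_eq_of_eqOn f0 f (fun j s (hs : s < τ) => replaceLaw_of_ne g i τ L (by omega)) ω
  rw [history, history, hz, hx, hu]

lemma cellCost_replaceLaw (g : Strategy Z X U) (μ : Omega T Z X W0 W → ℝ) {i : Fin n} {τ : ℕ}
    (L) (k : History Z X U i τ) (a : U i) :
    cellCost f0 f c (replaceLaw g i τ L) μ k a = cellCost f0 f c g μ k a := by
  simp only [cellCost, costWithAction, replaceLaw_replaceLaw, history_replaceLaw]

/-- Before `τ` the action at `τ` plays no role, and from `τ` on the two runs coincide. -/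
lemma costWithAction_sub_eq_of_agree {g : Strategy Z X U} {i : Fin n} {τ : ℕ}
    (hg : ∀ s, τ < s → MemorylessAt g i s) {zh : Fin (τ + 1) → Z} {xh xh' : Fin (τ + 1) → X i}
    {uh : Fin τ → ∀ j, U j} (hxx : xh (Fin.last τ) = xh' (Fin.last τ))
    {ω ω' : Omega T Z X W0 W}
    (hω : history f0 f g i τ ω = (zh, xh, uh)) (hω' : history f0 f g i τ ω' = (zh, xh', uh))
    (hx0 : ∀ j, j ≠ i → ω.2.1 j = ω'.2.1 j) (hw0 : ω.2.2.1 = ω'.2.2.1)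
    (hw : ∀ j, j ≠ i → ω.2.2.2 j = ω'.2.2.2 j)
    (hwi : ∀ s, τ ≤ s → toSeq (ω.2.2.2 i) s = toSeq (ω'.2.2.2 i) s) (a a' : U i) :
    costWithAction f0 f c g i τ a ω - costWithAction f0 f c g i τ a' ω =
      costWithAction f0 f c g i τ a ω' - costWithAction f0 f c g i τ a' ω' := by
  simp only [history, Prod.mk.injEq] at hω hω'
  have hz : zHist f0 f g τ ω = zHist f0 f g τ ω' := hω.1.trans hω'.1.symm
  have hu : uHist f0 f g τ ω = uHist f0 f g τ ω' := hω.2.2.trans hω'.2.2.symm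
  have hxi : Xp f0 f g i τ ω = Xp f0 f g i τ ω' :=
    (congrFun hω.2.1 (Fin.last τ)).trans (hxx.trans (congrFun hω'.2.1 (Fin.last τ)).symm)
  have hdiff : ∀ b : U i,
      costWithAction f0 f c g i τ b ω - costWithAction f0 f c g i τ b ω' =
        ∑ t ∈ Finset.range T,
          if t < τ then stageCost f0 f c g t ω - stageCost f0 f c g t ω' else 0 := by
    intro b
    set E := replaceLaw g i τ fun _ _ _ => b
    have hlt : ∀ j, ∀ s < τ, E j s = g j s := fun j s hs => replaceLaw_of_ne g i τ _ (by omega)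
    obtain ⟨hEz, hEx, hEu⟩ := hist_eq_of_eqOn f0 f hlt ω
    obtain ⟨hEz', hEx', hEu'⟩ := hist_eq_of_eqOn f0 f hlt ω'
    have hE : ∀ s, τ ≤ s → MemorylessAt E i s := by
      intro s hs
      rcases hs.lt_or_eq with hs | rfl
      · exact memorylessAt_replaceLaw_of_ne _ (hg s hs) hs.ne'
      · intro zh xh xh' uh _
        simp only [E, replaceLaw_self]
    rw [costWithAction, costWithAction, totalCost, totalCost, ← Finset.sum_sub_distrib]
    refine Finset.sum_congr rfl fun t _ => ?_
    split_ifs with ht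
    · rw [stageCost_congr_of_eqOn f0 f c (fun j s hs => hlt j s (by omega)) ω,
        stageCost_congr_of_eqOn f0 f c (fun j s hs => hlt j s (by omega)) ω']
    · rw [sub_eq_zero]
      refine stageCost_eq_of_memorylessFrom f0 f c hE hw0 hw hwi (by rw [hEz, hEz', hz])
        (by rw [hEu, hEu', hu]) (fun j hj => ?_) ?_ (not_lt.mp ht)
      · rw [hEx, hEx', xHist_eq_of_hist_eq f0 f hz hu (hx0 j hj) (hw j hj)]
      · rw [show Xp f0 f E i τ ω = xHist f0 f E i τ ω (Fin.last τ) from rfl,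
          show Xp f0 f E i τ ω' = xHist f0 f E i τ ω' (Fin.last τ) from rfl, hEx, hEx']
        exact hxi
  linarith [hdiff a, hdiff a']

end Costs

section Exchange

variable (PZ : Z → ℝ) (PX : ∀ i, Z → X i → ℝ) (PW0 : W0 → ℝ) (PW : ∀ i, W i → ℝ)
  (c : ℕ → Z → (∀ i, X i) → (∀ i, U i) → ℝ) {i : Fin n} {τ : ℕ}

noncomputable def localMass (g : Strategy Z X U) (k : History Z X U i τ) : ℝ :=
  ∑ y : X i × (Fin T → W i),
    if StationConsistent f g k y then localWeight PX PW i (k.1 0) y else 0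

lemma localMass_nonneg (hPX : ∀ i z x, 0 ≤ PX i z x) (hPW : ∀ i w, 0 ≤ PW i w)
    (g : Strategy Z X U) (k : History Z X U i τ) : 0 ≤ localMass (T := T) f PX PW g k :=
  Finset.sum_nonneg fun y _ => ite_nonneg (localWeight_nonneg PX PW hPX hPW i _ y) le_rfl

lemma localWeight_le_localMass (hPX : ∀ i z x, 0 ≤ PX i z x) (hPW : ∀ i w, 0 ≤ PW i w)
    (g : Strategy Z X U) {k : History Z X U i τ} {y : X i × (Fin T → W i)}
    (hy : StationConsistent f g k y) :
    localWeight PX PW i (k.1 0) y ≤ localMass (T := T) f PX PW g k := by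
  have h := Finset.single_le_sum (f := fun y => if StationConsistent f g k y then
    localWeight PX PW i (k.1 0) y else 0)
    (fun y _ => ite_nonneg (localWeight_nonneg PX PW hPX hPW i _ y) le_rfl) (Finset.mem_univ y)
  rwa [if_pos hy] at h

lemma weight_eq_zero_of_localMass_eq_zero (hPX : ∀ i z x, 0 ≤ PX i z x)
    (hPW : ∀ i w, 0 ≤ PW i w) (g : Strategy Z X U) {k : History Z X U i τ}
    (hk : localMass (T := T) f PX PW g k = 0) {ω : Omega T Z X W0 W}
    (hω : history f0 f g i τ ω = k) : weight PZ PX PW0 PW ω = 0 := by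
  obtain ⟨zh, xh, uh⟩ := k
  obtain ⟨h1, -, h3, h4⟩ := (history_eq_iff f0 f g i ω zh xh uh).mp hω
  have h0 : localWeight PX PW i ω.1 (ω.2.1 i, ω.2.2.2 i) = 0 := by
    rw [h1]
    exact le_antisymm
      ((localWeight_le_localMass f PX PW hPX hPW g (k := (zh, xh, uh)) ⟨h4, h3 i⟩).trans hk.le)
      (localWeight_nonneg PX PW hPX hPW i _ _)
  rw [weight_eq_localWeight_mul PZ PX PW0 PW i, h0, zero_mul]

lemma cellCost_eq_zero_of_localMass_eq_zero (hPX : ∀ i z x, 0 ≤ PX i z x)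
    (hPW : ∀ i w, 0 ≤ PW i w) (g : Strategy Z X U) {k : History Z X U i τ}
    (hk : localMass (T := T) f PX PW g k = 0) (a : U i) :
    cellCost f0 f c g (weight (T := T) PZ PX PW0 PW) k a = 0 :=
  Finset.sum_eq_zero fun ω _ => by
    split_ifs with hω
    · rw [weight_eq_zero_of_localMass_eq_zero f0 f PZ PX PW0 PW hPX hPW g hk hω, zero_mul]
    · rfl

lemma localMass_mul_cellCost_sub (μ : Omega T Z X W0 W → ℝ) (g : Strategy Z X U)
    (k k' : History Z X U i τ) (a a' : U i) :
    localMass (T := T) f PX PW g k' * (cellCost f0 f c g μ k a - cellCost f0 f c g μ k a') =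
      ∑ p : (X i × (Fin T → W i)) × Omega T Z X W0 W,
        if history f0 f g i τ p.2 = k ∧ StationConsistent f g k' p.1 then
          localWeight PX PW i (k'.1 0) p.1 * μ p.2 *
            (costWithAction f0 f c g i τ a p.2 - costWithAction f0 f c g i τ a' p.2)
        else 0 := by
  rw [Fintype.sum_prod_type (α₁ := X i × (Fin T → W i)) (α₂ := Omega T Z X W0 W)]
  simp only [localMass, cellCost, ← Finset.sum_sub_distrib, Finset.sum_mul_sum]
  refine Finset.sum_congr rfl fun y _ => Finset.sum_congr rfl fun ω _ => ?_
  by_cases hy : StationConsistent f g k' y <;> by_cases hω : history f0 f g i τ ω = k <;>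
    simp [hy, hω, mul_sub, mul_assoc]

lemma localMass_mul_cellCost_sub_comm {g : Strategy Z X U} (hg : ∀ s, τ < s → MemorylessAt g i s)
    {zh : Fin (τ + 1) → Z} {xh xh' : Fin (τ + 1) → X i} {uh : Fin τ → ∀ j, U j}
    (hxx : xh (Fin.last τ) = xh' (Fin.last τ)) (a a' : U i) :
    localMass (T := T) f PX PW g (zh, xh', uh) *
        (cellCost f0 f c g (weight (T := T) PZ PX PW0 PW) (zh, xh, uh) a -
          cellCost f0 f c g (weight (T := T) PZ PX PW0 PW) (zh, xh, uh) a') =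
      localMass (T := T) f PX PW g (zh, xh, uh) *
        (cellCost f0 f c g (weight (T := T) PZ PX PW0 PW) (zh, xh', uh) a -
          cellCost f0 f c g (weight (T := T) PZ PX PW0 PW) (zh, xh', uh) a') := by
  rw [localMass_mul_cellCost_sub, localMass_mul_cellCost_sub]
  refine Finset.sum_nbij' (swapPast i τ) (swapPast i τ) (by simp) (by simp)
    (fun p _ => swapPast_involutive i τ p) (fun p _ => swapPast_involutive i τ p) fun p _ => ?_
  by_cases hp : history f0 f g i τ p.2 = (zh, xh, uh) ∧ StationConsistent f g (zh, xh', uh) p.1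
  · obtain ⟨hs, hsy⟩ := swapPast_mem_cell f0 f hp.1 hp.2
    have hz : p.2.1 = zh 0 := ((history_eq_iff f0 f g i _ zh xh uh).mp hp.1).1
    have hD := costWithAction_sub_eq_of_agree f0 f c hg hxx hp.1 hs
      (fun j hj => (Function.update_of_ne hj _ _).symm) rfl
      (fun j hj => (Function.update_of_ne hj _ _).symm)
      (fun s hs => by simp only [swapPast, Function.update_self, toSeq_splice_of_le _ _ hs])
      a a'
    rw [if_pos hp, if_pos (And.intro hs hsy), hD]
    dsimp only
    rw [← hz, ← localWeight_mul_weight_swapPast PZ PX PW0 PW]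
  · have hs : ¬(history f0 f g i τ (swapPast i τ p).2 = (zh, xh', uh) ∧
        StationConsistent f g (zh, xh, uh) (swapPast i τ p).1) := fun ⟨hs, hsy⟩ => by
      have := swapPast_mem_cell f0 f hs hsy
      rw [swapPast_involutive] at this
      exact hp this
    rw [if_neg hp, if_neg hs]

lemma exists_memorylessLaw_cellCost_le (hPX : ∀ i z x, 0 ≤ PX i z x) (hPW : ∀ i w, 0 ≤ PW i w)
    {g : Strategy Z X U} (hg : ∀ s, τ < s → MemorylessAt g i s) :
    ∃ L : (Fin (τ + 1) → Z) → X i → (Fin τ → ∀ j, U j) → U i,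
      ∀ (k : History Z X U i τ) (b : U i),
        cellCost f0 f c g (weight (T := T) PZ PX PW0 PW) k (L k.1 (k.2.1 (Fin.last τ)) k.2.2) ≤
          cellCost f0 f c g (weight (T := T) PZ PX PW0 PW) k b := by
  choose best hbest using fun k : History Z X U i τ =>
    Finite.exists_min (cellCost f0 f c g (weight (T := T) PZ PX PW0 PW) k)
  refine ⟨fun zh x uh => if h : ∃ xh : Fin (τ + 1) → X i, xh (Fin.last τ) = x ∧
      localMass (T := T) f PX PW g (zh, xh, uh) ≠ 0 then best (zh, h.choose, uh)
    else Classical.arbitrary (U i), fun ⟨zh, xh, uh⟩ b => ?_⟩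
  by_cases hM : localMass (T := T) f PX PW g (zh, xh, uh) = 0
  · simp only [cellCost_eq_zero_of_localMass_eq_zero f0 f PZ PX PW0 PW c hPX hPW g hM, le_refl]
  have h : ∃ xh' : Fin (τ + 1) → X i, xh' (Fin.last τ) = xh (Fin.last τ) ∧
      localMass (T := T) f PX PW g (zh, xh', uh) ≠ 0 := ⟨xh, rfl, hM⟩
  obtain ⟨hlast, hM'⟩ := h.choose_spec
  simp only [dif_pos h]
  have hpos : 0 < localMass (T := T) f PX PW g (zh, h.choose, uh) :=
    (localMass_nonneg f PX PW hPX hPW g _).lt_of_ne' hM'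
  have hcross := localMass_mul_cellCost_sub_comm (T := T) f0 f PZ PX PW0 PW c hg (zh := zh)
    (uh := uh) hlast.symm (best (zh, h.choose, uh)) b
  have hle : localMass (T := T) f PX PW g (zh, h.choose, uh) *
      (cellCost f0 f c g (weight (T := T) PZ PX PW0 PW) (zh, xh, uh) (best (zh, h.choose, uh)) -
        cellCost f0 f c g (weight (T := T) PZ PX PW0 PW) (zh, xh, uh) b) ≤ 0 := by
    rw [hcross]
    exact mul_nonpos_of_nonneg_of_nonpos (localMass_nonneg f PX PW hPX hPW g _)
      (sub_nonpos.mpr (hbest _ b))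
  exact sub_nonpos.mp (nonpos_of_mul_nonpos_right hle hpos)

lemma exists_replaceLaw_memorylessAt_J_le (hPX : ∀ i z x, 0 ≤ PX i z x)
    (hPW : ∀ i w, 0 ≤ PW i w) {g : Strategy Z X U} (hg : ∀ s, τ < s → MemorylessAt g i s) :
    ∃ L, MemorylessAt (replaceLaw g i τ L) i τ ∧
      J f0 f c (weight (T := T) PZ PX PW0 PW) (replaceLaw g i τ L) ≤
        J f0 f c (weight (T := T) PZ PX PW0 PW) g := by
  obtain ⟨L, hL⟩ := exists_memorylessLaw_cellCost_le f0 f PZ PX PW0 PW c hPX hPW hg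
  refine ⟨fun zh xh uh => L zh (xh (Fin.last τ)) uh, fun zh xh xh' uh h => ?_, ?_⟩
  · simp only [replaceLaw_self, h]
  · rw [J_eq_sum_cellCost _ _ _ _ _ i τ, J_eq_sum_cellCost _ _ _ _ _ i τ]
    refine Finset.sum_le_sum fun k _ => ?_
    rw [cellCost_replaceLaw, replaceLaw_self]
    exact hL k _

def forgetPastFrom (g : Strategy Z X U) (i : Fin n) (τ : ℕ) : Strategy Z X U :=
  fun j t zh xh uh => if j = i ∧ τ ≤ t then g j t zh (fun _ => xh (Fin.last t)) uh
    else g j t zh xh uh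

lemma exists_memorylessFrom_J_le (hPX : ∀ i z x, 0 ≤ PX i z x) (hPW : ∀ i w, 0 ≤ PW i w)
    (g : Strategy Z X U) (i : Fin n) (m : ℕ) :
    ∃ G : Strategy Z X U, (∀ j, j ≠ i → G j = g j) ∧ (∀ s, T - m ≤ s → MemorylessAt G i s) ∧
      J f0 f c (weight (T := T) PZ PX PW0 PW) G ≤ J f0 f c (weight (T := T) PZ PX PW0 PW) g := by
  induction m with
  | zero =>
    refine ⟨forgetPastFrom g i T, fun j hj => ?_, fun s hs zh xh xh' uh h => ?_,
      (J_congr f0 f c (fun j s hs => ?_) _).le⟩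
    · funext t zh xh uh
      simp [forgetPastFrom, hj]
    · simp [forgetPastFrom, show T ≤ s by omega, h]
    · funext zh xh uh
      simp [forgetPastFrom, not_le.mpr hs]
  | succ m ih =>
    obtain ⟨G, hGi, hGm, hGJ⟩ := ih
    by_cases hm : m < T
    · obtain ⟨L, hL, hJ⟩ := exists_replaceLaw_memorylessAt_J_le (τ := T - (m + 1)) f0 f PZ PX PW0
        PW c hPX hPW (g := G) fun s hs => hGm s (by omega)
      refine ⟨replaceLaw G i (T - (m + 1)) L, fun j hj => ?_, fun s hs => ?_, hJ.trans hGJ⟩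
      · funext t
        rw [replaceLaw_of_ne G i _ L fun h => hj h.1, hGi j hj]
      · rcases hs.lt_or_eq with hs | rfl
        · exact memorylessAt_replaceLaw_of_ne L (hGm s (by omega)) hs.ne'
        · exact hL
    · exact ⟨G, hGi, fun s hs => hGm s (by omega), hGJ⟩

end Exchange

theorem full_obs_person_by_person
    (PZ : Z → ℝ) (PX : ∀ i, Z → X i → ℝ) (PW0 : W0 → ℝ) (PW : ∀ i, W i → ℝ)
    (hPX : ∀ i z, IsLaw (PX i z))
    (hPW : ∀ i, IsLaw (PW i))
    (c : ℕ → Z → (∀ i, X i) → (∀ i, U i) → ℝ)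
    (i : Fin n) (g : Strategy Z X U) :
    ∃ gbar : Strategy Z X U,
      (∀ j, j ≠ i → gbar j = g j) ∧
      (∀ (t : ℕ) (zh : Fin (t + 1) → Z) (xh xh' : Fin (t + 1) → X i)
          (uh : Fin t → ∀ j, U j), xh (Fin.last t) = xh' (Fin.last t) →
            gbar i t zh xh uh = gbar i t zh xh' uh) ∧
      J f0 f c (weight (T := T) PZ PX PW0 PW) gbar ≤
        J f0 f c (weight (T := T) PZ PX PW0 PW) g := by
  obtain ⟨G, hGi, hGm, hGJ⟩ := exists_memorylessFrom_J_le f0 f PZ PX PW0 PW c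
    (fun i z => (hPX i z).1) (fun i => (hPW i).1) g i T
  exact ⟨G, hGi, fun t => hGm t (by omega), hGJ⟩

end ControlSharing
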